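/- Let ε > 0 and suppose that for every H-free tournament S on fewer than n vertices one has tr(S) ≥ |S|^ε. Let T be an H-free tournament on n vertices containing disjoint vertex sets A, B with d(A,B) = 1, |A| ≥ c·n and |B| ≥ c·n, where 0 < c < 1 and ε ≤ log_c(1/2). Then tr(T) ≥ n^ε. -/

import Mathlib

open Finset

structure Tournament (V : Type*) where
  adj : V → V → Prop
  irrefl : ∀ v, ¬ adj v v
  asymm : ∀ u v, adj u v → ¬ adj v u
  total : ∀ u v, u ≠ v → adj u v ∨ adj v u

namespace Tournament

variable {V : Type*} [Fintype V] [DecidableEq V]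

open Classical in
/-- number of directed edges from `X` to `Y` -/
noncomputable def e (T : Tournament V) (X Y : Finset V) : ℕ :=
  ((X ×ˢ Y).filter fun p => T.adj p.1 p.2).card

/-- directed density from `X` to `Y` -/
noncomputable def density (T : Tournament V) (X Y : Finset V) : ℝ :=
  (T.e X Y : ℝ) / ((X.card : ℝ) * (Y.card : ℝ))

/-- `S` induces a transitive subtournament -/
def IsTransSet (T : Tournament V) (S : Finset V) : Prop :=
  ∀ a ∈ S, ∀ b ∈ S, ∀ c ∈ S, T.adj a b → T.adj b c → T.adj a c

open Classical in
/-- size of the largest transitive subtournament -/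
noncomputable def tr (T : Tournament V) : ℕ :=
  Finset.sup ((Finset.univ : Finset (Finset V)).filter fun S => T.IsTransSet S) Finset.card

/-- `T` contains a copy of `H` -/
def HasCopy {W : Type*} (T : Tournament V) (H : Tournament W) : Prop :=
  ∃ f : W ↪ V, ∀ a b, H.adj a b → T.adj (f a) (f b)

end Tournament
/-!
If `A` is complete to `B`, a transitive subtournament of `A` followed by one of `B` is again
transitive, so `tr(T) ≥ tr(T|A) + tr(T|B)`. Both parts are `H`-free on fewer than `n` vertices,
so the hypothesis gives `tr(T) ≥ 2 (cn)^ε = 2 c^ε n^ε ≥ n^ε`, the last step because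
`ε ≤ log_c(1/2)` means `c^ε ≥ 1/2`.
-/

namespace Tournament

variable {U V W : Type*}

def comap (T : Tournament V) (f : U ↪ V) : Tournament U where
  adj a b := T.adj (f a) (f b)
  irrefl a := T.irrefl (f a)
  asymm a b := T.asymm (f a) (f b)
  total a b hab := T.total (f a) (f b) (f.injective.ne hab)

theorem HasCopy.of_comap {T : Tournament V} {f : U ↪ V}
    {H : Tournament W} (h : (T.comap f).HasCopy H) : T.HasCopy H :=
  let ⟨g, hg⟩ := h
  ⟨g.trans f, hg⟩

theorem IsTransSet.map {T : Tournament V} {f : U ↪ V} {S : Finset U}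
    (hS : (T.comap f).IsTransSet S) : T.IsTransSet (S.map f) := by
  simp only [IsTransSet, mem_map, forall_exists_index, and_imp, forall_apply_eq_imp_iff₂]
  exact hS

/-- Indexed by `Fin #A` rather than the subtype, to match statements about tournaments on
`Fin m`. -/
noncomputable def induce (T : Tournament V) (A : Finset V) : Tournament (Fin #A) :=
  T.comap (A.equivFin.symm.toEmbedding.trans (Function.Embedding.subtype _))

theorem card_le_tr [Fintype V] (T : Tournament V) {S : Finset V} (hS : T.IsTransSet S) :
    #S ≤ T.tr := by
  classical
  exact le_sup (mem_filter.2 ⟨mem_univ S, hS⟩)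

theorem exists_isTransSet_card_eq_tr [Fintype V] (T : Tournament V) :
    ∃ S : Finset V, T.IsTransSet S ∧ #S = T.tr := by
  classical
  obtain ⟨S, hS, h⟩ := exists_mem_eq_sup (univ.filter fun S => T.IsTransSet S)
    ⟨∅, mem_filter.2 ⟨mem_univ _, by simp [IsTransSet]⟩⟩ card
  exact ⟨S, (mem_filter.1 hS).2, h.symm⟩

theorem exists_isTransSet_subset_card_eq_tr_induce (T : Tournament V) (A : Finset V) :
    ∃ S ⊆ A, T.IsTransSet S ∧ #S = (T.induce A).tr := by
  obtain ⟨S, hS, hcard⟩ := (T.induce A).exists_isTransSet_card_eq_tr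
  refine ⟨_, ?_, hS.map, by rw [card_map, hcard]⟩
  simp only [subset_iff, mem_map, forall_exists_index, and_imp]
  rintro _ i - rfl
  exact (A.equivFin.symm i).2

theorem adj_of_density_eq_one (T : Tournament V) {A B : Finset V} (h : T.density A B = 1) :
    ∀ a ∈ A, ∀ b ∈ B, T.adj a b := by
  classical
  have hne : (#A : ℝ) * #B ≠ 0 := fun h0 => by simp [density, h0] at h
  have he : T.e A B = #(A ×ˢ B) := by
    rw [card_product]
    exact_mod_cast (div_eq_one_iff_eq hne).1 h
  intro a ha b hb
  have hfilter : #((A ×ˢ B).filter fun p => T.adj p.1 p.2) = #(A ×ˢ B) := he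
  exact filter_card_eq hfilter (a, b) (mk_mem_product ha hb)

theorem nonempty_of_density_eq_one (T : Tournament V) {A B : Finset V}
    (h : T.density A B = 1) : A.Nonempty ∧ B.Nonempty := by
  simp only [← card_pos, Nat.pos_iff_ne_zero]
  constructor <;> intro h0 <;> simp [density, h0] at h

theorem disjoint_of_adj (T : Tournament V) {A B : Finset V}
    (h : ∀ a ∈ A, ∀ b ∈ B, T.adj a b) : Disjoint A B :=
  disjoint_left.2 fun a ha hb => T.irrefl a (h a ha a hb)

theorem IsTransSet.union_of_adj [DecidableEq V] {T : Tournament V} {S₁ S₂ : Finset V}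
    (h₁ : T.IsTransSet S₁) (h₂ : T.IsTransSet S₂) (h : ∀ a ∈ S₁, ∀ b ∈ S₂, T.adj a b) :
    T.IsTransSet (S₁ ∪ S₂) := by
  intro a ha b hb c hc hab hbc
  rw [mem_union] at ha hb hc
  rcases ha with ha | ha <;> rcases hc with hc | hc
  · rcases hb with hb | hb
    · exact h₁ a ha b hb c hc hab hbc
    · exact absurd hbc (T.asymm _ _ (h c hc b hb))
  · exact h a ha c hc
  · rcases hb with hb | hb
    · exact absurd hab (T.asymm _ _ (h b hb a ha))
    · exact absurd hbc (T.asymm _ _ (h c hc b hb))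
  · rcases hb with hb | hb
    · exact absurd hab (T.asymm _ _ (h b hb a ha))
    · exact h₂ a ha b hb c hc hab hbc

theorem tr_induce_add_tr_induce_le [Fintype V] (T : Tournament V) {A B : Finset V}
    (h : ∀ a ∈ A, ∀ b ∈ B, T.adj a b) : (T.induce A).tr + (T.induce B).tr ≤ T.tr := by
  classical
  obtain ⟨SA, hSA, hSAt, hSAc⟩ := T.exists_isTransSet_subset_card_eq_tr_induce A
  obtain ⟨SB, hSB, hSBt, hSBc⟩ := T.exists_isTransSet_subset_card_eq_tr_induce B
  have hadj : ∀ a ∈ SA, ∀ b ∈ SB, T.adj a b := fun a ha b hb => h a (hSA ha) b (hSB hb)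
  rw [← hSAc, ← hSBc, ← card_union_of_disjoint (T.disjoint_of_adj hadj)]
  exact T.card_le_tr (hSAt.union_of_adj hSBt hadj)

end Tournament

theorem Real.one_le_two_mul_rpow_of_le_logb {c ε : ℝ} (hc0 : 0 < c) (hc1 : c < 1)
    (h : ε ≤ Real.logb c (1 / 2)) : 1 ≤ 2 * c ^ ε := by
  have : (1 / 2 : ℝ) ≤ c ^ ε := by
    calc (1 / 2 : ℝ) = c ^ Real.logb c (1 / 2) := (Real.rpow_logb hc0 hc1.ne (by norm_num)).symm
      _ ≤ c ^ ε := Real.rpow_le_rpow_of_exponent_ge hc0 hc1.le h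
  linarith

open Tournament in
theorem stmt_5_general {W : Type*} (H : Tournament W) (n : ℕ) (T : Tournament (Fin n))
    (ε c : ℝ) (hε : 0 < ε) (hc0 : 0 < c) (hc1 : c < 1)
    (hεc : ε ≤ Real.logb c (1 / 2))
    (hind : ∀ m : ℕ, m < n → ∀ S : Tournament (Fin m),
      ¬ S.HasCopy H → (m : ℝ) ^ ε ≤ (S.tr : ℝ))
    (hfree : ¬ T.HasCopy H)
    (A B : Finset (Fin n))
    (hdens : T.density A B = 1)
    (hA : c * (n : ℝ) ≤ (A.card : ℝ))
    (hB : c * (n : ℝ) ≤ (B.card : ℝ)) :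
    (n : ℝ) ^ ε ≤ (T.tr : ℝ) := by
  have hcomp := T.adj_of_density_eq_one hdens
  obtain ⟨hAne, hBne⟩ := T.nonempty_of_density_eq_one hdens
  have hcard : #A + #B ≤ n := by
    simpa [card_union_of_disjoint (T.disjoint_of_adj hcomp)] using card_le_univ (A ∪ B)
  have hTA := hind #A (by have := hBne.card_pos; omega) (T.induce A) fun h => hfree h.of_comap
  have hTB := hind #B (by have := hAne.card_pos; omega) (T.induce B) fun h => hfree h.of_comap
  calc (n : ℝ) ^ ε ≤ 2 * c ^ ε * (n : ℝ) ^ ε :=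
        le_mul_of_one_le_left (by positivity) (Real.one_le_two_mul_rpow_of_le_logb hc0 hc1 hεc)
    _ = (c * n) ^ ε + (c * n) ^ ε := by rw [Real.mul_rpow hc0.le n.cast_nonneg]; ring
    _ ≤ (#A : ℝ) ^ ε + (#B : ℝ) ^ ε := by gcongr
    _ ≤ (T.induce A).tr + (T.induce B).tr := add_le_add hTA hTB
    _ ≤ T.tr := by exact_mod_cast T.tr_induce_add_tr_induce_le hcomp

open Tournament in
theorem stmt_5 {W : Type*} (H : Tournament W) (n : ℕ) (T : Tournament (Fin n))
    (ε c : ℝ) (hε : 0 < ε) (hc0 : 0 < c) (hc1 : c < 1)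
    (hεc : ε ≤ Real.logb c (1 / 2))
    (hind : ∀ m : ℕ, m < n → ∀ S : Tournament (Fin m),
      ¬ S.HasCopy H → (m : ℝ) ^ ε ≤ (S.tr : ℝ))
    (hfree : ¬ T.HasCopy H)
    (A B : Finset (Fin n)) (hAB : Disjoint A B)
    (hdens : T.density A B = 1)
    (hA : c * (n : ℝ) ≤ (A.card : ℝ))
    (hB : c * (n : ℝ) ≤ (B.card : ℝ)) :
    (n : ℝ) ^ ε ≤ (T.tr : ℝ) :=
  stmt_5_general H n T ε c hε hc0 hc1 hεc hind hfree A B hdens hA hB
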